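/- Let ε ∈ (0, 1/100], α ≥ 100, h ∈ ℝ², K₁ > 0. Let η : ℝ² → [0,1] be smooth with η(x) = 1 for |x − h| ≥ εα and ‖∇η‖_{L²(ℝ²)} ≤ K₁/√(ln α). Let φ ∈ C_0^∞(ℝ²; ℝ²) be divergence free, let ψ : ℝ² → ℝ be smooth with ∇^⊥ψ = φ, set ψ̃(x) = ψ(x) − ψ(h) and φ_ε = ∇^⊥(η ψ̃). Then there is a universal constant C > 0 such that for every v ∈ L²(ℝ²; ℝ²), | ∫_{ℝ²} v · φ_ε | ≤ ‖v‖_{L²(ℝ²)} ( ‖φ‖_{L²(ℝ²)} + C K₁ (εα/√(ln α)) · sup_{ℝ²} |φ| ). -/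

import Mathlib

open MeasureTheory Real RealInnerProductSpace

noncomputable section

/-- The rotation by `π/2`: `x^⊥ = (−x₂, x₁)`. -/
def perp (v : EuclideanSpace ℝ (Fin 2)) : EuclideanSpace ℝ (Fin 2) :=
  EuclideanSpace.single 0 (-(v 1)) + EuclideanSpace.single 1 (v 0)

abbrev E2 := EuclideanSpace ℝ (Fin 2)

lemma perp_apply (v : E2) (i : Fin 2) :
    perp v i = if i = 0 then -(v 1) else v 0 := by
  fin_cases i <;> simp [perp, EuclideanSpace.single_apply]

lemma perp_add (u v : E2) : perp (u + v) = perp u + perp v := by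
  ext i
  fin_cases i <;> simp [perp_apply] <;> ring

lemma perp_smul (c : ℝ) (v : E2) : perp (c • v) = c • perp v := by
  ext i
  fin_cases i <;> simp [perp_apply] <;> ring

lemma norm_perp (v : E2) : ‖perp v‖ = ‖v‖ := by
  rw [EuclideanSpace.norm_eq, EuclideanSpace.norm_eq]
  simp [Fin.sum_univ_two, perp_apply, add_comm]

def perpL : E2 →ₗ[ℝ] E2 where
  toFun := perp
  map_add' := perp_add
  map_smul' := perp_smul

lemma perp_continuous : Continuous perp :=
  perpL.continuous_of_finiteDimensional

/-- With a smooth cut-off `η` equal to `1` outside `D(h, εα)` and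
`‖∇η‖_{L²} ≤ K₁/√(ln α)`, and `φ_ε = ∇^⊥(η ψ̃)` where `ψ̃ = ψ − ψ(h)` is the modified
stream function of the divergence-free field `φ`, for every `v ∈ L²(ℝ²;ℝ²)` one has
`|∫ v·φ_ε| ≤ ‖v‖_{L²}(‖φ‖_{L²} + C K₁ (εα/√(ln α)) sup |φ|)` for a universal `C > 0`. -/
theorem statement12 :
    ∃ C : ℝ, 0 < C ∧
      ∀ (ε α K₁ : ℝ) (h : EuclideanSpace ℝ (Fin 2))
        (η : EuclideanSpace ℝ (Fin 2) → ℝ)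
        (φ : EuclideanSpace ℝ (Fin 2) → EuclideanSpace ℝ (Fin 2))
        (ψ : EuclideanSpace ℝ (Fin 2) → ℝ)
        (v : EuclideanSpace ℝ (Fin 2) → EuclideanSpace ℝ (Fin 2)),
        0 < ε → ε ≤ 1 / 100 → 100 ≤ α → 0 < K₁ →
        ContDiff ℝ (⊤ : ℕ∞) η → (∀ x, η x ∈ Set.Icc (0 : ℝ) 1) →
        (∀ x : EuclideanSpace ℝ (Fin 2), ε * α ≤ ‖x - h‖ → η x = 1) →
        eLpNorm (fun x => gradient η x) 2 volume
          ≤ ENNReal.ofReal (K₁ / Real.sqrt (Real.log α)) →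
        ContDiff ℝ (⊤ : ℕ∞) φ → HasCompactSupport φ →
        (∀ x : EuclideanSpace ℝ (Fin 2),
          fderiv ℝ φ x (EuclideanSpace.single 0 1) 0
            + fderiv ℝ φ x (EuclideanSpace.single 1 1) 1 = 0) →
        ContDiff ℝ (⊤ : ℕ∞) ψ → (∀ x, perp (gradient ψ x) = φ x) →
        MemLp v 2 volume →
        |∫ x : EuclideanSpace ℝ (Fin 2),
            ⟪v x, perp (gradient (fun z => η z * (ψ z - ψ h)) x)⟫|
          ≤ (eLpNorm v 2 volume).toReal
            * ((eLpNorm φ 2 volume).toReal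
              + C * K₁ * (ε * α / Real.sqrt (Real.log α))
                * ⨆ x : EuclideanSpace ℝ (Fin 2), ‖φ x‖) := by
  refine ⟨1, one_pos, ?_⟩
  intro ε α K₁ h η φ ψ v hε hε' hα hK₁ hη hη01 hη1 hηL2 hφ hφsupp _hdiv hψ hψφ hv
  set w : E2 → E2 := fun x => perp (gradient (fun z => η z * (ψ z - ψ h)) x) with hw_def
  have hηd : ∀ x, DifferentiableAt ℝ η x := fun x => (hη.differentiable (by simp)).differentiableAt
  have hψd : ∀ x, DifferentiableAt ℝ ψ x := fun x => (hψ.differentiable (by simp)).differentiableAt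
  have hψtd : ∀ x, DifferentiableAt ℝ (fun z => ψ z - ψ h) x := fun x => (hψd x).sub_const _
  -- pointwise formula for w
  have hgrad : ∀ x, gradient (fun z => η z * (ψ z - ψ h)) x
      = η x • gradient ψ x + (ψ x - ψ h) • gradient η x := by
    intro x
    show (InnerProductSpace.toDual ℝ E2).symm (fderiv ℝ (fun z => η z * (ψ z - ψ h)) x)
        = _
    rw [fderiv_fun_mul (hηd x) (hψtd x), fderiv_sub_const]
    simp [gradient, map_add, map_smulₛₗ]
  have hwpt : ∀ x, w x = η x • φ x + (ψ x - ψ h) • perp (gradient η x) := by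
    intro x
    rw [hw_def]
    simp only [hgrad x, perp_add, perp_smul, hψφ x]
  -- gradient of η vanishes outside the disc
  have hgradη0 : ∀ x : E2, ε * α < ‖x - h‖ → gradient η x = 0 := by
    intro x hx
    have hopen : IsOpen {y : E2 | ε * α < ‖y - h‖} :=
      isOpen_lt continuous_const ((continuous_id.sub continuous_const).norm)
    have hev : η =ᶠ[nhds x] fun _ => (1 : ℝ) :=
      Filter.eventuallyEq_of_mem (hopen.mem_nhds hx) (fun y hy => hη1 y (le_of_lt hy))
    show (InnerProductSpace.toDual ℝ E2).symm (fderiv ℝ η x) = 0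
    rw [hev.fderiv_eq, fderiv_fun_const]
    simp
  -- sup norm of φ
  set M := ⨆ x : E2, ‖φ x‖ with hM_def
  have hbdd : BddAbove (Set.range fun x : E2 => ‖φ x‖) :=
    hφ.continuous.norm.bddAbove_range_of_hasCompactSupport hφsupp.norm
  have hφM : ∀ x, ‖φ x‖ ≤ M := fun x => le_ciSup hbdd x
  have hM0 : 0 ≤ M := le_trans (norm_nonneg _) (hφM 0)
  have hεαM0 : 0 ≤ ε * α * M := by positivity
  -- bound on the stream function inside the disc
  have hψtb : ∀ x : E2, ‖x - h‖ ≤ ε * α → |ψ x - ψ h| ≤ ε * α * M := by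
    intro x hx
    have key : ‖ψ x - ψ h‖ ≤ M * ‖x - h‖ := by
      apply Convex.norm_image_sub_le_of_norm_fderiv_le (fun y _ => hψd y)
        (fun y _ => ?_) convex_univ (Set.mem_univ h) (Set.mem_univ x)
      have h1 : ‖gradient ψ y‖ = ‖fderiv ℝ ψ y‖ :=
        (InnerProductSpace.toDual ℝ E2).symm.norm_map (fderiv ℝ ψ y)
      rw [← h1, ← norm_perp, hψφ y]
      exact hφM y
    calc |ψ x - ψ h| = ‖ψ x - ψ h‖ := (Real.norm_eq_abs _).symm
      _ ≤ M * ‖x - h‖ := key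
      _ ≤ M * (ε * α) := by gcongr
      _ = ε * α * M := by ring
  -- pointwise bound for the cutoff correction term
  have hpt : ∀ x, ‖(ψ x - ψ h) • perp (gradient η x)‖ ≤ ‖(ε * α * M) • gradient η x‖ := by
    intro x
    rw [norm_smul, norm_smul, norm_perp]
    rcases le_or_gt ‖x - h‖ (ε * α) with hc | hc
    · apply mul_le_mul_of_nonneg_right _ (norm_nonneg _)
      rw [Real.norm_eq_abs, Real.norm_eq_abs, abs_of_nonneg hεαM0]
      exact hψtb x hc
    · simp [hgradη0 x hc]
  -- continuity facts
  have hcontgη : Continuous (fun x => gradient η x) := by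
    have := hη.continuous_fderiv (by simp)
    exact ((InnerProductSpace.toDual ℝ E2).symm.continuous).comp this
  have hcont1 : Continuous (fun x => η x • φ x) :=
    (hη.continuous).smul hφ.continuous
  have hcont2 : Continuous (fun x : E2 => (ψ x - ψ h) • perp (gradient η x)) :=
    ((hψ.continuous).sub continuous_const).smul (perp_continuous.comp hcontgη)
  have hcontw : Continuous w := by
    rw [funext hwpt]; exact hcont1.add hcont2
  -- L² bounds
  have hφL2 : MemLp φ 2 volume :=
    hφ.continuous.memLp_of_hasCompactSupport hφsupp
  have hsq : 0 < Real.sqrt (Real.log α) := by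
    apply Real.sqrt_pos.2
    apply Real.log_pos
    linarith
  have hKs0 : 0 ≤ K₁ / Real.sqrt (Real.log α) := by positivity
  have h1 : eLpNorm (fun x => η x • φ x) 2 volume ≤ eLpNorm φ 2 volume := by
    apply eLpNorm_mono
    intro x
    rw [norm_smul, Real.norm_eq_abs, abs_of_nonneg (hη01 x).1]
    calc η x * ‖φ x‖ ≤ 1 * ‖φ x‖ :=
          mul_le_mul_of_nonneg_right (hη01 x).2 (norm_nonneg _)
      _ = ‖φ x‖ := one_mul _
  have h2 : eLpNorm (fun x : E2 => (ψ x - ψ h) • perp (gradient η x)) 2 volume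
      ≤ ENNReal.ofReal (ε * α * M) * ENNReal.ofReal (K₁ / Real.sqrt (Real.log α)) := by
    calc eLpNorm (fun x : E2 => (ψ x - ψ h) • perp (gradient η x)) 2 volume
        ≤ eLpNorm (fun x : E2 => (ε * α * M) • gradient η x) 2 volume := eLpNorm_mono hpt
      _ = ‖(ε * α * M)‖ₑ * eLpNorm (fun x => gradient η x) 2 volume :=
          eLpNorm_const_smul (ε * α * M) (fun x => gradient η x) 2 volume
      _ ≤ ENNReal.ofReal (ε * α * M) * ENNReal.ofReal (K₁ / Real.sqrt (Real.log α)) := by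
          rw [Real.enorm_eq_ofReal hεαM0]
          exact mul_le_mul_right hηL2 _
  have hwle : eLpNorm w 2 volume
      ≤ eLpNorm φ 2 volume
        + ENNReal.ofReal (ε * α * M) * ENNReal.ofReal (K₁ / Real.sqrt (Real.log α)) := by
    rw [funext hwpt]
    refine le_trans (eLpNorm_add_le hcont1.aestronglyMeasurable
      hcont2.aestronglyMeasurable (by norm_num)) (add_le_add h1 h2)
  have hrhs_ne : eLpNorm φ 2 volume
        + ENNReal.ofReal (ε * α * M) * ENNReal.ofReal (K₁ / Real.sqrt (Real.log α)) ≠ ⊤ := by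
    apply ENNReal.add_ne_top.2
    exact ⟨hφL2.2.ne, (ENNReal.mul_lt_top ENNReal.ofReal_lt_top ENNReal.ofReal_lt_top).ne⟩
  have hmemw : MemLp w 2 volume :=
    ⟨hcontw.aestronglyMeasurable, lt_of_le_of_lt hwle (lt_top_iff_ne_top.2 hrhs_ne)⟩
  -- Cauchy–Schwarz
  have key : |∫ x : E2, ⟪v x, w x⟫|
      ≤ (eLpNorm v 2 volume).toReal * (eLpNorm w 2 volume).toReal := by
    have hcongr : (fun x : E2 => ⟪v x, w x⟫)
        =ᵐ[volume] fun x => ⟪(hv.toLp v) x, (hmemw.toLp w) x⟫ := by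
      filter_upwards [hv.coeFn_toLp, hmemw.coeFn_toLp] with x hx hy
      rw [hx, hy]
    rw [integral_congr_ae hcongr]
    calc |∫ x : E2, ⟪(hv.toLp v) x, (hmemw.toLp w) x⟫|
        = |⟪hv.toLp v, hmemw.toLp w⟫| := by rw [L2.inner_def]
      _ ≤ ‖hv.toLp v‖ * ‖hmemw.toLp w‖ := abs_real_inner_le_norm _ _
      _ = (eLpNorm v 2 volume).toReal * (eLpNorm w 2 volume).toReal := by
          rw [Lp.norm_toLp, Lp.norm_toLp]
  have hWb : (eLpNorm w 2 volume).toReal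
      ≤ (eLpNorm φ 2 volume).toReal + (ε * α * M) * (K₁ / Real.sqrt (Real.log α)) := by
    have h := ENNReal.toReal_mono hrhs_ne hwle
    rwa [ENNReal.toReal_add hφL2.2.ne
        (ENNReal.mul_lt_top ENNReal.ofReal_lt_top ENNReal.ofReal_lt_top).ne,
      ENNReal.toReal_mul, ENNReal.toReal_ofReal hεαM0, ENNReal.toReal_ofReal hKs0] at h
  show |∫ x : E2, ⟪v x, w x⟫| ≤ _
  calc |∫ x : E2, ⟪v x, w x⟫|
      ≤ (eLpNorm v 2 volume).toReal * (eLpNorm w 2 volume).toReal := key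
    _ ≤ (eLpNorm v 2 volume).toReal
        * ((eLpNorm φ 2 volume).toReal + (ε * α * M) * (K₁ / Real.sqrt (Real.log α))) :=
          mul_le_mul_of_nonneg_left hWb ENNReal.toReal_nonneg
    _ = (eLpNorm v 2 volume).toReal
        * ((eLpNorm φ 2 volume).toReal
          + 1 * K₁ * (ε * α / Real.sqrt (Real.log α)) * M) := by ring
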